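/- arXiv:1010.0361 — 18 statements merged into one kernel-verified Lean document; each statement's English description precedes it below -/
import Mathlib

section
/- Let u : ℤ → ℝ → ℝ be such that each function u i is differentiable and u satisfies the semi-discrete sine-Gordon equation: for all i ∈ ℤ and x ∈ ℝ, (u (i+1))'(x) − sin(u (i+1) x) = (u i)'(x) + sin(u i x). Define v : ℤ → ℝ → ℝ by v i x = ((u i)'(x) − sin(u i x))/2. Then for every i ∈ ℤ the function x ↦ v (i+1) x − v i x is differentiable, and at every point x where cos(u i x) ≥ 0 its derivative satisfies (v (i+1) − v i)'(x) = (v (i+1) x + v i x) · √(1 − (v (i+1) x − v i x)²). -/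
/-!
The Bäcklund relation makes `v (i+1) - v i = sin (u i)` and `v (i+1) + v i = (u i)'`, so the
claim is the chain rule `(sin u)' = u' cos u`, with `cos u = √(1 - sin² u)` where `cos u ≥ 0`.
-/

open Real

theorem Real.sqrt_one_sub_sin_sq_of_cos_nonneg {θ : ℝ} (h : 0 ≤ cos θ) :
    √(1 - sin θ ^ 2) = cos θ := by
  rw [← cos_sq', sqrt_sq h]

theorem deriv_sin_comp_eq_mul_sqrt {f : ℝ → ℝ} {x : ℝ} (hf : DifferentiableAt ℝ f x)
    (hcos : 0 ≤ cos (f x)) :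
    deriv (fun y => sin (f y)) x = deriv f x * √(1 - sin (f x) ^ 2) := by
  rw [hf.hasDerivAt.sin.deriv, sqrt_one_sub_sin_sq_of_cos_nonneg hcos, mul_comm]

/-- The substitution v = (uₓ − sin u)/2 maps solutions of the semi-discrete
sine-Gordon equation into solutions of the semi-discrete complex sine-Gordon
equation (with `+` sign where cos u ≥ 0). -/
theorem stmt_0 (u : ℤ → ℝ → ℝ)
    (hdiff : ∀ i : ℤ, Differentiable ℝ (u i))
    (hsg : ∀ (i : ℤ) (x : ℝ),
      deriv (u (i + 1)) x - Real.sin (u (i + 1) x)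
        = deriv (u i) x + Real.sin (u i x))
    (v : ℤ → ℝ → ℝ)
    (hv : ∀ (i : ℤ) (x : ℝ), v i x = (deriv (u i) x - Real.sin (u i x)) / 2) :
    ∀ i : ℤ, Differentiable ℝ (fun x => v (i + 1) x - v i x) ∧
      ∀ x : ℝ, 0 ≤ Real.cos (u i x) →
        deriv (fun y => v (i + 1) y - v i y) x
          = (v (i + 1) x + v i x) * Real.sqrt (1 - (v (i + 1) x - v i x) ^ 2) := by
  intro i
  have hsub : ∀ x, v (i + 1) x - v i x = sin (u i x) := fun x => by
    rw [hv, hv, hsg]; ring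
  have hadd : ∀ x, v (i + 1) x + v i x = deriv (u i) x := fun x => by
    rw [hv, hv, hsg]; ring
  simp only [hsub, hadd]
  exact ⟨(hdiff i).sin, fun x => deriv_sin_comp_eq_mul_sqrt (hdiff i x)⟩
end

section
/- Let v : ℤ → ℝ → ℝ be such that each v i is differentiable, |v (i+1) x − v i x| < 1 for all i ∈ ℤ and x ∈ ℝ, and for all i, x one has (v (i+1) − v i)'(x) = (v (i+1) x + v i x) · √(1 − (v (i+1) x − v i x)²). Define u : ℤ → ℝ → ℝ by u i x = arcsin(v (i+1) x − v i x). Then u satisfies the semi-discrete sine-Gordon equation: for all i ∈ ℤ and x ∈ ℝ, (u (i+1))'(x) − sin(u (i+1) x) = (u i)'(x) + sin(u i x). -/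
/-! Because `|v (i+1) - v i| < 1`, `sin (u i) = v (i+1) - v i`, and the chain rule for `arcsin`
turns the hypothesis on `(v (i+1) - v i)'` into `(u i)' = v (i+1) + v i`. Both sides of the
sine-Gordon equation then equal `2 v (i+1)`. -/

open Real

lemma deriv_arcsin_comp_of_deriv_eq_mul_sqrt {w : ℝ → ℝ} {x a : ℝ}
    (hw : DifferentiableAt ℝ w x) (hx : |w x| < 1) (h : deriv w x = a * √(1 - w x ^ 2)) :
    deriv (fun y => arcsin (w y)) x = a := by
  obtain ⟨hlo, hhi⟩ := abs_lt.1 hx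
  have hsqrt : 0 < √(1 - w x ^ 2) := sqrt_pos.2 (by nlinarith)
  change deriv (arcsin ∘ w) x = a
  rw [((hasDerivAt_arcsin hlo.ne' hhi.ne).comp x hw.hasDerivAt).deriv, h]
  field_simp

/-- The transformation u = arcsin(v₁ − v) maps solutions of the semi-discrete
complex sine-Gordon equation back into solutions of the semi-discrete
sine-Gordon equation. -/
theorem stmt_1 (v : ℤ → ℝ → ℝ)
    (hdiff : ∀ i : ℤ, Differentiable ℝ (v i))
    (hbound : ∀ (i : ℤ) (x : ℝ), |v (i + 1) x - v i x| < 1)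
    (heq : ∀ (i : ℤ) (x : ℝ),
      deriv (fun y => v (i + 1) y - v i y) x
        = (v (i + 1) x + v i x) * Real.sqrt (1 - (v (i + 1) x - v i x) ^ 2))
    (u : ℤ → ℝ → ℝ)
    (hu : ∀ (i : ℤ) (x : ℝ), u i x = Real.arcsin (v (i + 1) x - v i x)) :
    ∀ (i : ℤ) (x : ℝ),
      deriv (u (i + 1)) x - Real.sin (u (i + 1) x)
        = deriv (u i) x + Real.sin (u i x) := by
  have hderiv (i : ℤ) (x : ℝ) : deriv (u i) x = v (i + 1) x + v i x := by
    rw [show u i = fun y => arcsin (v (i + 1) y - v i y) from funext (hu i)]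
    exact deriv_arcsin_comp_of_deriv_eq_mul_sqrt
      ((hdiff (i + 1)).sub (hdiff i)).differentiableAt (hbound i x) (heq i x)
  have hsin (i : ℤ) (x : ℝ) : sin (u i x) = v (i + 1) x - v i x := by
    obtain ⟨hlo, hhi⟩ := abs_lt.1 (hbound i x)
    rw [hu, sin_arcsin hlo.le hhi.le]
  intro i x
  rw [hderiv, hderiv, hsin, hsin]
  ring
end

section
/- Let φ, ψ, p, q : ℝ × ℝ → ℝ satisfy, for all y, z ∈ ℝ, p(φ(y,z), ψ(y,z)) = y and q(φ(y,z), ψ(y,z)) = z. Let u : ℤ × ℤ → ℝ satisfy, for all (i,j) ∈ ℤ², φ(u(i,j+1), u(i+1,j+1)) = ψ(u(i,j), u(i+1,j)). Define v(i,j) = φ(u(i,j), u(i+1,j)). Then for all (i,j) ∈ ℤ², p(v(i+1,j), v(i+1,j+1)) = q(v(i,j), v(i,j+1)). -/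
/-! Along a vertical edge the pair `(v, v_{0,1})` equals `(φ, ψ)` evaluated at the horizontal
edge `(u, u_{1,0})`, so `p` and `q` recover `u` and `u_{1,0}` from it. Both sides of the
`v`-equation are therefore the same value `u_{1,0}`. -/

section QuadGraph

variable {α β : Type*} {φ ψ : α × α → β} {u : ℤ × ℤ → α} {v : ℤ × ℤ → β}

theorem vertical_pair_eq
    (heq : ∀ i j : ℤ, φ (u (i, j + 1), u (i + 1, j + 1)) = ψ (u (i, j), u (i + 1, j)))
    (hv : ∀ i j : ℤ, v (i, j) = φ (u (i, j), u (i + 1, j))) (i j : ℤ) :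
    (v (i, j), v (i, j + 1)) = (φ (u (i, j), u (i + 1, j)), ψ (u (i, j), u (i + 1, j))) := by
  rw [hv, hv, heq]

end QuadGraph

/-- General scheme of non-point invertible transformations for quad-graph
equations: v = φ(u, u_{1,0}) maps solutions of φ(u_{0,1}, u_{1,1}) = ψ(u, u_{1,0})
into solutions of p(v_{1,0}, v_{1,1}) = q(v, v_{0,1}). -/
theorem stmt_3 (φ ψ p q : ℝ × ℝ → ℝ)
    (hp : ∀ y z : ℝ, p (φ (y, z), ψ (y, z)) = y)
    (hq : ∀ y z : ℝ, q (φ (y, z), ψ (y, z)) = z)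
    (u : ℤ × ℤ → ℝ)
    (heq : ∀ i j : ℤ, φ (u (i, j + 1), u (i + 1, j + 1)) = ψ (u (i, j), u (i + 1, j)))
    (v : ℤ × ℤ → ℝ)
    (hv : ∀ i j : ℤ, v (i, j) = φ (u (i, j), u (i + 1, j))) :
    ∀ i j : ℤ, p (v (i + 1, j), v (i + 1, j + 1)) = q (v (i, j), v (i, j + 1)) := by
  intro i j
  rw [vertical_pair_eq heq hv, vertical_pair_eq heq hv, hp, hq]
end

section
/- Let φ, ψ, p, q : ℝ × ℝ → ℝ satisfy, for all y, z ∈ ℝ, the identities p(φ(y,z), ψ(y,z)) = y, q(φ(y,z), ψ(y,z)) = z, φ(p(y,z), q(y,z)) = y and ψ(p(y,z), q(y,z)) = z. Let v : ℤ × ℤ → ℝ satisfy, for all (i,j) ∈ ℤ², p(v(i+1,j), v(i+1,j+1)) = q(v(i,j), v(i,j+1)). Define u(i,j) = p(v(i,j), v(i,j+1)). Then for all (i,j) ∈ ℤ², φ(u(i,j+1), u(i+1,j+1)) = ψ(u(i,j), u(i+1,j)). -/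
theorem stmt_4_general (φ ψ p q : ℝ × ℝ → ℝ)
    (hφ : ∀ y z : ℝ, φ (p (y, z), q (y, z)) = y)
    (hψ : ∀ y z : ℝ, ψ (p (y, z), q (y, z)) = z)
    (v : ℤ × ℤ → ℝ)
    (heq : ∀ i j : ℤ, p (v (i + 1, j), v (i + 1, j + 1)) = q (v (i, j), v (i, j + 1)))
    (u : ℤ × ℤ → ℝ)
    (hu : ∀ i j : ℤ, u (i, j) = p (v (i, j), v (i, j + 1))) :
    ∀ i j : ℤ, φ (u (i, j + 1), u (i + 1, j + 1)) = ψ (u (i, j), u (i + 1, j)) := by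
  intro i j
  -- The equation on `v` turns each side into `(φ, ψ) ∘ (p, q)` applied at a vertical edge of `v`.
  have hleft : φ (u (i, j + 1), u (i + 1, j + 1)) = v (i, j + 1) := by
    rw [hu i, hu (i + 1), heq i (j + 1), hφ]
  have hright : ψ (u (i, j), u (i + 1, j)) = v (i, j + 1) := by
    rw [hu i, hu (i + 1), heq i j, hψ]
  rw [hleft, hright]

/-- Inverse direction of the scheme: u = p(v, v_{0,1}) maps solutions of
p(v_{1,0}, v_{1,1}) = q(v, v_{0,1}) back into solutions of
φ(u_{0,1}, u_{1,1}) = ψ(u, u_{1,0}). -/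
theorem stmt_4 (φ ψ p q : ℝ × ℝ → ℝ)
    (hp : ∀ y z : ℝ, p (φ (y, z), ψ (y, z)) = y)
    (hq : ∀ y z : ℝ, q (φ (y, z), ψ (y, z)) = z)
    (hφ : ∀ y z : ℝ, φ (p (y, z), q (y, z)) = y)
    (hψ : ∀ y z : ℝ, ψ (p (y, z), q (y, z)) = z)
    (v : ℤ × ℤ → ℝ)
    (heq : ∀ i j : ℤ, p (v (i + 1, j), v (i + 1, j + 1)) = q (v (i, j), v (i, j + 1)))
    (u : ℤ × ℤ → ℝ)
    (hu : ∀ i j : ℤ, u (i, j) = p (v (i, j), v (i, j + 1))) :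
    ∀ i j : ℤ, φ (u (i, j + 1), u (i + 1, j + 1)) = ψ (u (i, j), u (i + 1, j)) :=
  stmt_4_general φ ψ p q hφ hψ v heq u hu
end

section
/- Let v : ℤ × ℤ → ℝ satisfy v(i,j)·v(i+1,j) ≠ 1 for all (i,j) and the equation v(i+1,j+1) · ( v(i,j)·(v(i,j+1) − v(i+1,j)) + v(i,j+1) + 1 ) = v(i,j) · (v(i+1,j) + 1) for all (i,j) ∈ ℤ². Define u(i,j) = −2(v(i+1,j) + 1)/(v(i,j)·v(i+1,j) − 1) − 1. Then u satisfies, for all (i,j) ∈ ℤ², the equation (u(i+1,j+1) − 1)(u(i,j+1) + 1) = (u(i+1,j) + 1)(u(i,j) − 1). -/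
/-!
Since `u - 1 = -2 v₁₀ (v + 1) / (v v₁₀ - 1)`, the equation for `v`, cleared of denominators,
says both `u₀₁ - 1 = v (u + 1)` and `u - 1 = v₁₀ (u₀₁ + 1)`. Shifting the first in `i` gives
`u₁₁ - 1 = v₁₀ (u₁₀ + 1)`, so both sides of the Nijhoff–Capel equation equal
`v₁₀ (u₁₀ + 1) (u₀₁ + 1)`.
-/

section

variable {K : Type*} [Field K] {a b c d : K}

theorem neg_two_mul_div_sub_one_sub_one (hab : a * b ≠ 1) :
    -2 * (b + 1) / (a * b - 1) - 1 - 1 = -2 * b * (a + 1) / (a * b - 1) := by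
  have hab' : a * b - 1 ≠ 0 := sub_ne_zero.mpr hab
  rw [sub_sub, eq_div_iff hab', sub_mul, div_mul_cancel₀ _ hab']
  ring

theorem sub_one_shift_snd_eq_mul_add_one (hab : a * b ≠ 1) (hcd : c * d ≠ 1)
    (h : d * (a * (c - b) + c + 1) = a * (b + 1)) :
    -2 * (d + 1) / (c * d - 1) - 1 - 1 = a * (-2 * (b + 1) / (a * b - 1) - 1 + 1) := by
  rw [neg_two_mul_div_sub_one_sub_one hcd, sub_add_cancel, mul_div_assoc',
    div_eq_div_iff (sub_ne_zero.mpr hcd) (sub_ne_zero.mpr hab)]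
  linear_combination 2 * h

theorem sub_one_eq_mul_shift_snd_add_one (hab : a * b ≠ 1) (hcd : c * d ≠ 1)
    (h : d * (a * (c - b) + c + 1) = a * (b + 1)) :
    -2 * (b + 1) / (a * b - 1) - 1 - 1 = b * (-2 * (d + 1) / (c * d - 1) - 1 + 1) := by
  rw [neg_two_mul_div_sub_one_sub_one hab, sub_add_cancel, mul_div_assoc',
    div_eq_div_iff (sub_ne_zero.mpr hab) (sub_ne_zero.mpr hcd)]
  linear_combination -2 * b * h

end

/-- The inverse transformation u = −2(v_{1,0} + 1)/(v v_{1,0} − 1) − 1 maps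
solutions of v_{1,1}(v(v_{0,1} − v_{1,0}) + v_{0,1} + 1) = v(v_{1,0} + 1) back
into solutions of the Nijhoff–Capel equation. -/
theorem stmt_6 (v : ℤ × ℤ → ℝ)
    (hne : ∀ i j : ℤ, v (i, j) * v (i + 1, j) ≠ 1)
    (heq : ∀ i j : ℤ,
      v (i + 1, j + 1) * (v (i, j) * (v (i, j + 1) - v (i + 1, j)) + v (i, j + 1) + 1)
        = v (i, j) * (v (i + 1, j) + 1))
    (u : ℤ × ℤ → ℝ)
    (hu : ∀ i j : ℤ,
      u (i, j) = -2 * (v (i + 1, j) + 1) / (v (i, j) * v (i + 1, j) - 1) - 1) :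
    ∀ i j : ℤ,
      (u (i + 1, j + 1) - 1) * (u (i, j + 1) + 1)
        = (u (i + 1, j) + 1) * (u (i, j) - 1) := by
  intro i j
  have hshift : u (i + 1, j + 1) - 1 = v (i + 1, j) * (u (i + 1, j) + 1) := by
    rw [hu, hu]
    exact sub_one_shift_snd_eq_mul_add_one (hne _ _) (hne _ _) (heq _ _)
  have hbase : u (i, j) - 1 = v (i + 1, j) * (u (i, j + 1) + 1) := by
    rw [hu, hu]
    exact sub_one_eq_mul_shift_snd_add_one (hne _ _) (hne _ _) (heq _ _)
  rw [hshift, hbase]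
  ring
end

section
/- Let v : ℤ × ℤ → ℝ satisfy v(i,j) ≠ −1 for all (i,j) and the equation v(i+1,j+1) · ( v(i,j)·(v(i,j+1) − v(i+1,j)) + v(i,j+1) + 1 ) = v(i,j) · (v(i+1,j) + 1) for all (i,j) ∈ ℤ². Define η(i,j) = v(i,j) · ( 1/(v(i,j+1) + 1) − 1/(v(i,j−1) + 1) ). Then η satisfies the linearization of the equation at v: for all (i,j) ∈ ℤ², η(i+1,j+1)·( v(i,j)·(v(i,j+1) − v(i+1,j)) + v(i,j+1) + 1 ) + v(i+1,j+1)·( η(i,j)·(v(i,j+1) − v(i+1,j)) + v(i,j)·(η(i,j+1) − η(i+1,j)) + η(i,j+1) ) = η(i,j)·(v(i+1,j) + 1) + v(i,j)·η(i+1,j). -/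
/-!
In the variable `a = 1/(v + 1)` the equation becomes `a₁₀ (1 - a₁₁) = a₀₁ (1 - a)`; precisely,
the defect of the original equation is that of the new one times `∏ (v + 1)` over the four
vertices of the square. Linearizing this identity (chain rule, `da = -dv/(v + 1)²`) reduces the
claim to the statement that `ξ = a (1 - a) (a₀,₋₁ - a₀₁)`, the image of `η`, solves the
linearization of the new equation, which is a polynomial consequence of three consecutive
instances of that equation.
-/

variable {K : Type*} [Field K]

def quadEqn (a : ℤ × ℤ → K) (i j : ℤ) : K :=
  a (i + 1, j) * (1 - a (i + 1, j + 1)) - a (i, j + 1) * (1 - a (i, j))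

def quadLin (a ξ : ℤ × ℤ → K) (i j : ℤ) : K :=
  ξ (i + 1, j) * (1 - a (i + 1, j + 1)) - a (i + 1, j) * ξ (i + 1, j + 1)
    - ξ (i, j + 1) * (1 - a (i, j)) + a (i, j + 1) * ξ (i, j)

def quadSymmetry (a : ℤ × ℤ → K) (p : ℤ × ℤ) : K :=
  a p * (1 - a p) * (a (p.1, p.2 - 1) - a (p.1, p.2 + 1))

theorem quadLin_quadSymmetry {a : ℤ × ℤ → K} (h : ∀ i j, quadEqn a i j = 0) (i j : ℤ) :
    quadLin a (quadSymmetry a) i j = 0 := by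
  have h₀ := h i (j - 1)
  have h₁ := h i j
  have h₂ := h i (j + 1)
  simp only [quadEqn, sub_add_cancel] at h₀ h₁ h₂
  simp only [quadLin, quadSymmetry, add_sub_cancel_right]
  -- `h₁` turns the common factor `a₁₀ (1 - a₁₁)` into `a₀₁ (1 - a)`; `h₀` and `h₂` then
  -- eliminate `a₁,₋₁` and `a₁₂`.
  linear_combination
    ((1 - a (i + 1, j)) * (a (i + 1, j - 1) - a (i + 1, j + 1))
        - a (i + 1, j + 1) * (a (i + 1, j) - a (i + 1, j + 1 + 1))) * h₁
      + a (i, j + 1) * (1 - a (i, j)) * (h₀ - h₂)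

theorem quadEqn_inv_add_one {v : ℤ × ℤ → K} (hv : ∀ p, v p + 1 ≠ 0) (i j : ℤ) :
    quadEqn (fun p => (v p + 1)⁻¹) i j =
      (v (i + 1, j + 1) * (v (i, j) * (v (i, j + 1) - v (i + 1, j)) + v (i, j + 1) + 1)
        - v (i, j) * (v (i + 1, j) + 1)) /
      ((v (i, j) + 1) * (v (i, j + 1) + 1) * (v (i + 1, j) + 1) * (v (i + 1, j + 1) + 1)) := by
  have := hv (i, j); have := hv (i, j + 1); have := hv (i + 1, j); have := hv (i + 1, j + 1)
  simp only [quadEqn]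
  field_simp
  ring

theorem linearized_of_quadLin {v η : ℤ × ℤ → K} (hv : ∀ p, v p + 1 ≠ 0) (i j : ℤ)
    (hH : quadEqn (fun p => (v p + 1)⁻¹) i j = 0)
    (hL : quadLin (fun p => (v p + 1)⁻¹) (fun p => -η p / (v p + 1) ^ 2) i j = 0) :
      η (i + 1, j + 1) * (v (i, j) * (v (i, j + 1) - v (i + 1, j)) + v (i, j + 1) + 1)
        + v (i + 1, j + 1) * (η (i, j) * (v (i, j + 1) - v (i + 1, j))
            + v (i, j) * (η (i, j + 1) - η (i + 1, j)) + η (i, j + 1))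
        = η (i, j) * (v (i + 1, j) + 1) + v (i, j) * η (i + 1, j) := by
  have := hv (i, j); have := hv (i, j + 1); have := hv (i + 1, j); have := hv (i + 1, j + 1)
  -- the linearization of `G = H · ∏ (v + 1)`, where `G` and `H` are the defects of the two equations
  have key : η (i + 1, j + 1) * (v (i, j) * (v (i, j + 1) - v (i + 1, j)) + v (i, j + 1) + 1)
        + v (i + 1, j + 1) * (η (i, j) * (v (i, j + 1) - v (i + 1, j))
            + v (i, j) * (η (i, j + 1) - η (i + 1, j)) + η (i, j + 1))
        - (η (i, j) * (v (i + 1, j) + 1) + v (i, j) * η (i + 1, j)) =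
      ((v (i, j) + 1) * (v (i, j + 1) + 1) * (v (i + 1, j) + 1) * (v (i + 1, j + 1) + 1)) *
        (quadLin (fun p => (v p + 1)⁻¹) (fun p => -η p / (v p + 1) ^ 2) i j
          + quadEqn (fun p => (v p + 1)⁻¹) i j *
            (η (i, j) / (v (i, j) + 1) + η (i, j + 1) / (v (i, j + 1) + 1)
              + η (i + 1, j) / (v (i + 1, j) + 1) + η (i + 1, j + 1) / (v (i + 1, j + 1) + 1))) := by
    simp only [quadEqn, quadLin]
    field_simp
    ring
  rw [hH, hL] at key
  linear_combination key

/-- η = v(1/(v_{0,1} + 1) − 1/(v_{0,−1} + 1)) is a symmetry of the equation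
v_{1,1}(v(v_{0,1} − v_{1,0}) + v_{0,1} + 1) = v(v_{1,0} + 1): it satisfies the
linearization of the equation at the solution v. -/
theorem stmt_7 (v : ℤ × ℤ → ℝ)
    (hne : ∀ i j : ℤ, v (i, j) ≠ -1)
    (heq : ∀ i j : ℤ,
      v (i + 1, j + 1) * (v (i, j) * (v (i, j + 1) - v (i + 1, j)) + v (i, j + 1) + 1)
        = v (i, j) * (v (i + 1, j) + 1))
    (η : ℤ × ℤ → ℝ)
    (hη : ∀ i j : ℤ,
      η (i, j) = v (i, j) * (1 / (v (i, j + 1) + 1) - 1 / (v (i, j - 1) + 1))) :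
    ∀ i j : ℤ,
      η (i + 1, j + 1) * (v (i, j) * (v (i, j + 1) - v (i + 1, j)) + v (i, j + 1) + 1)
        + v (i + 1, j + 1) * (η (i, j) * (v (i, j + 1) - v (i + 1, j))
            + v (i, j) * (η (i, j + 1) - η (i + 1, j)) + η (i, j + 1))
        = η (i, j) * (v (i + 1, j) + 1) + v (i, j) * η (i + 1, j) := by
  have hv : ∀ p : ℤ × ℤ, v p + 1 ≠ 0 := fun p h => hne p.1 p.2 (eq_neg_of_add_eq_zero_left h)
  have hquad : ∀ i j, quadEqn (fun p => (v p + 1)⁻¹) i j = 0 := fun i j => by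
    rw [quadEqn_inv_add_one hv, heq, sub_self, zero_div]
  have hξ : (fun p => -η p / (v p + 1) ^ 2) = quadSymmetry (fun p => (v p + 1)⁻¹) := by
    funext ⟨i, j⟩
    have := hv (i, j); have := hv (i, j + 1); have := hv (i, j - 1)
    simp only [hη, quadSymmetry]
    field_simp
    ring
  intro i j
  exact linearized_of_quadLin hv i j (hquad i j) (hξ ▸ quadLin_quadSymmetry hquad i j)
end

section
/- Let α, β ∈ ℝ and let u : ℤ × ℤ → ℝ satisfy u(i,j) ≠ 0 for all (i,j) and the Hietarinta equation u(i+1,j+1)·(u(i,j) + β)·(u(i,j+1) + α) = u(i,j+1)·(u(i,j) + α)·(u(i+1,j) + β) for all (i,j) ∈ ℤ². Define v(i,j) = u(i+1,j)·(u(i,j) + α)/u(i,j) − α. Then v again satisfies the Hietarinta equation with the same parameters: v(i+1,j+1)·(v(i,j) + β)·(v(i,j+1) + α) = v(i,j+1)·(v(i,j) + α)·(v(i+1,j) + β) for all (i,j) ∈ ℤ². -/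
/-!
Write `v + α = u₁₀ (u + α) / u`. Dividing the equation at `(i, j)` by `u₀₁` turns it into
`(u + β)(v₀₁ + α) = (u + α)(u₁₀ + β)`, so `v₀₁` is determined by `u` and `u₁₀` as well.
Then `u (v + β)` and `(u + β) v₀₁` both equal `N = u u₁₀ + α (u₁₀ - u) + β u`, and the same holds
one step to the right with numerator `N₁`; both sides of the equation for `v`, multiplied by
`u u₁₀`, reduce to `u₁₀ (u + α) v₀₁ N₁`.
-/

namespace Hietarinta

theorem quad_of_shift_relations {R : Type*} [CommRing R] [IsDomain R]
    {α β a b c v v₁₀ v₀₁ v₁₁ : R} (ha : a ≠ 0) (hb : b ≠ 0)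
    (hv : a * (v + α) = b * (a + α)) (hv₁₀ : b * (v₁₀ + α) = c * (b + α))
    (hv₀₁ : (a + β) * (v₀₁ + α) = (a + α) * (b + β))
    (hv₁₁ : (b + β) * (v₁₁ + α) = (b + α) * (c + β)) :
    v₁₁ * (v + β) * (v₀₁ + α) = v₀₁ * (v + α) * (v₁₀ + β) := by
  refine mul_left_cancel₀ (mul_ne_zero ha hb) ?_
  linear_combination (b * v₁₁ * (v₀₁ + α) - b * v₀₁ * (v₁₀ + β)) * hv
    - b * (a + α) * v₀₁ * hv₁₀ - α * b * v₁₁ * hv₀₁ + b * (a + α) * v₀₁ * hv₁₁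

theorem mul_add_eq_of_eq_div_sub {K : Type*} [Field K] {α x y v : K} (hx : x ≠ 0)
    (hv : v = y * (x + α) / x - α) : x * (v + α) = y * (x + α) := by
  rw [hv, sub_add_cancel, mul_div_cancel₀ _ hx]

end Hietarinta

open Hietarinta in
/-- The transformation v = u_{1,0}(u + α)/u − α is an autotransformation of the
Hietarinta equation u_{1,1}(u + β)(u_{0,1} + α) = u_{0,1}(u + α)(u_{1,0} + β). -/
theorem stmt_8 (α β : ℝ) (u : ℤ × ℤ → ℝ)
    (hne : ∀ i j : ℤ, u (i, j) ≠ 0)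
    (heq : ∀ i j : ℤ,
      u (i + 1, j + 1) * (u (i, j) + β) * (u (i, j + 1) + α)
        = u (i, j + 1) * (u (i, j) + α) * (u (i + 1, j) + β))
    (v : ℤ × ℤ → ℝ)
    (hv : ∀ i j : ℤ, v (i, j) = u (i + 1, j) * (u (i, j) + α) / u (i, j) - α) :
    ∀ i j : ℤ,
      v (i + 1, j + 1) * (v (i, j) + β) * (v (i, j + 1) + α)
        = v (i, j + 1) * (v (i, j) + α) * (v (i + 1, j) + β) := by
  have hshift (i j : ℤ) : u (i, j) * (v (i, j) + α) = u (i + 1, j) * (u (i, j) + α) :=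
    mul_add_eq_of_eq_div_sub (hne i j) (hv i j)
  have hvertical (i j : ℤ) :
      (u (i, j) + β) * (v (i, j + 1) + α) = (u (i, j) + α) * (u (i + 1, j) + β) :=
    mul_left_cancel₀ (hne i (j + 1)) <| by
      linear_combination (u (i, j) + β) * hshift i (j + 1) + heq i j
  intro i j
  exact quad_of_shift_relations (hne i j) (hne (i + 1) j) (hshift i j) (hshift (i + 1) j)
    (hvertical i j) (hvertical (i + 1) j)
end

section
/- Let α, β ∈ ℝ and let u : ℤ × ℤ → ℝ satisfy β + u(i,j) − u(i,j+1) ≠ 0 for all (i,j) and the Hietarinta equation u(i+1,j+1)·(u(i,j) + β)·(u(i,j+1) + α) = u(i,j+1)·(u(i,j) + α)·(u(i+1,j) + β) for all (i,j) ∈ ℤ². Define w(i,j) = β·u(i,j+1)/(β + u(i,j) − u(i,j+1)). Then w again satisfies the Hietarinta equation with the same parameters: w(i+1,j+1)·(w(i,j) + β)·(w(i,j+1) + α) = w(i,j+1)·(w(i,j) + α)·(w(i+1,j) + β) for all (i,j) ∈ ℤ². -/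
section Hietarinta

variable {K : Type*} [Field K]

def HietarintaCell (α β x x₁₀ x₀₁ x₁₁ : K) : Prop :=
  x₁₁ * (x + β) * (x₀₁ + α) = x₀₁ * (x + α) * (x₁₀ + β)

def hietarintaTransform (β x x₀₁ : K) : K :=
  β * x₀₁ / (β + x - x₀₁)

theorem hietarintaCell_hietarintaTransform {α β u₀₀ u₁₀ u₀₁ u₁₁ u₀₂ u₁₂ : K}
    (h₀₀ : β + u₀₀ - u₀₁ ≠ 0) (h₁₀ : β + u₁₀ - u₁₁ ≠ 0)
    (h₀₁ : β + u₀₁ - u₀₂ ≠ 0) (h₁₁ : β + u₁₁ - u₁₂ ≠ 0)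
    (hcell₀ : HietarintaCell α β u₀₀ u₁₀ u₀₁ u₁₁)
    (hcell₁ : HietarintaCell α β u₀₁ u₁₁ u₀₂ u₁₂) :
    HietarintaCell α β (hietarintaTransform β u₀₀ u₀₁) (hietarintaTransform β u₁₀ u₁₁)
      (hietarintaTransform β u₀₁ u₀₂) (hietarintaTransform β u₁₁ u₁₂) := by
  unfold HietarintaCell hietarintaTransform at *
  field_simp
  -- cleared of denominators, the claim is a polynomial combination of the two cell equations
  linear_combination
    (-(u₀₂ * β ^ 3) + u₀₂ * u₁₂ * β ^ 2 - u₀₂ * u₁₁ * β ^ 2) * hcell₀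
    + (β ^ 4 + u₁₀ * β ^ 3 - u₁₁ * β ^ 3 + u₀₀ * β ^ 3 + u₀₀ * u₁₀ * β ^ 2
      - u₀₀ * u₁₁ * β ^ 2) * hcell₁

end Hietarinta

/-- The transformation w = βu_{0,1}/(β + u − u_{0,1}) is an autotransformation of
the Hietarinta equation u_{1,1}(u + β)(u_{0,1} + α) = u_{0,1}(u + α)(u_{1,0} + β). -/
theorem stmt_9 (α β : ℝ) (u : ℤ × ℤ → ℝ)
    (hne : ∀ i j : ℤ, β + u (i, j) - u (i, j + 1) ≠ 0)
    (heq : ∀ i j : ℤ,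
      u (i + 1, j + 1) * (u (i, j) + β) * (u (i, j + 1) + α)
        = u (i, j + 1) * (u (i, j) + α) * (u (i + 1, j) + β))
    (w : ℤ × ℤ → ℝ)
    (hw : ∀ i j : ℤ, w (i, j) = β * u (i, j + 1) / (β + u (i, j) - u (i, j + 1))) :
    ∀ i j : ℤ,
      w (i + 1, j + 1) * (w (i, j) + β) * (w (i, j + 1) + α)
        = w (i, j + 1) * (w (i, j) + α) * (w (i + 1, j) + β) := by
  intro i j
  have hcell := hietarintaCell_hietarintaTransform (hne i j) (hne (i + 1) j)
    (hne i (j + 1)) (hne (i + 1) (j + 1)) (heq i j) (heq i (j + 1))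
  simpa only [HietarintaCell, hietarintaTransform, ← hw] using hcell
end

section
/- Let u : ℤ × ℤ → ℝ satisfy u(i,j) ≠ 0 and u(i,j) ≠ 1 for all (i,j), together with the discrete Liouville equation u(i+1,j+1)·u(i,j) = (u(i+1,j) − 1)·(u(i,j+1) − 1) for all (i,j) ∈ ℤ². Define I(i,j) = ( u(i+2,j)/(u(i+1,j) − 1) + 1 ) · ( (u(i,j) − 1)/u(i+1,j) + 1 ) and J(i,j) = ( u(i,j+2)/(u(i,j+1) − 1) + 1 ) · ( (u(i,j) − 1)/u(i,j+1) + 1 ). Then for all (i,j) ∈ ℤ², I(i,j+1) = I(i,j) and J(i+1,j) = J(i,j). -/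
/-!
On row `j + 1` the Liouville equation rewrites the two fractions of `I` in terms of row `j`,
exchanging their denominators:
`u_{2,1} / (u_{1,1} - 1) = (u_{2,0} - 1) / u_{1,0}` and `(u_{0,1} - 1) / u_{1,1} = u / (u_{1,0} - 1)`.
Since `(c / (b - 1) + 1) * ((a - 1) / b + 1) = (c + b - 1) * (a + b - 1) / ((b - 1) * b)` is
unchanged when the denominators `b - 1` and `b` of the two fractions are swapped, `I` is invariant
under the shift of `j`. The equation is symmetric in `i` and `j`, and `J` is `I` for the
transposed solution.
-/

def IsLiouvilleSolution (u : ℤ × ℤ → ℝ) : Prop :=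
  ∀ i j : ℤ, u (i + 1, j + 1) * u (i, j) = (u (i + 1, j) - 1) * (u (i, j + 1) - 1)

theorem IsLiouvilleSolution.comp_swap {u : ℤ × ℤ → ℝ} (hu : IsLiouvilleSolution u) :
    IsLiouvilleSolution (u ∘ Prod.swap) := fun i j => by
  simpa only [Function.comp_apply, Prod.swap_prod_mk, mul_comm (u (j, i + 1) - 1)] using hu j i

noncomputable def liouvilleI (u : ℤ × ℤ → ℝ) (i j : ℤ) : ℝ :=
  (u (i + 2, j) / (u (i + 1, j) - 1) + 1) * ((u (i, j) - 1) / u (i + 1, j) + 1)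

theorem IsLiouvilleSolution.liouvilleI_add_one {u : ℤ × ℤ → ℝ} (hu : IsLiouvilleSolution u)
    (hne0 : ∀ i j : ℤ, u (i, j) ≠ 0) (hne1 : ∀ i j : ℤ, u (i, j) ≠ 1) (i j : ℤ) :
    liouvilleI u i (j + 1) = liouvilleI u i j := by
  have hb0 : u (i + 1, j) ≠ 0 := hne0 _ _
  have hb : u (i + 1, j) - 1 ≠ 0 := sub_ne_zero.mpr (hne1 _ _)
  have hb' : u (i + 1, j + 1) - 1 ≠ 0 := sub_ne_zero.mpr (hne1 _ _)
  have hc : u (i + 2, j + 1) / (u (i + 1, j + 1) - 1) = (u (i + 2, j) - 1) / u (i + 1, j) := by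
    rw [div_eq_div_iff hb' hb0]
    simpa only [add_assoc, one_add_one_eq_two] using hu (i + 1) j
  have ha : (u (i, j + 1) - 1) / u (i + 1, j + 1) = u (i, j) / (u (i + 1, j) - 1) := by
    rw [div_eq_div_iff (hne0 _ _) hb]
    linear_combination -hu i j
  rw [liouvilleI, liouvilleI, hc, ha]
  field_simp
  ring

/-- The functions I and J are, respectively, an i-integral and a j-integral of
the discrete Liouville equation u_{1,1}·u = (u_{1,0} − 1)(u_{0,1} − 1). -/
theorem stmt_10 (u : ℤ × ℤ → ℝ)
    (hne0 : ∀ i j : ℤ, u (i, j) ≠ 0)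
    (hne1 : ∀ i j : ℤ, u (i, j) ≠ 1)
    (heq : ∀ i j : ℤ,
      u (i + 1, j + 1) * u (i, j) = (u (i + 1, j) - 1) * (u (i, j + 1) - 1))
    (I J : ℤ × ℤ → ℝ)
    (hI : ∀ i j : ℤ, I (i, j)
      = (u (i + 2, j) / (u (i + 1, j) - 1) + 1) * ((u (i, j) - 1) / u (i + 1, j) + 1))
    (hJ : ∀ i j : ℤ, J (i, j)
      = (u (i, j + 2) / (u (i, j + 1) - 1) + 1) * ((u (i, j) - 1) / u (i, j + 1) + 1)) :
    ∀ i j : ℤ, I (i, j + 1) = I (i, j) ∧ J (i + 1, j) = J (i, j) := by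
  have hu : IsLiouvilleSolution u := heq
  intro i j
  constructor
  · rw [hI, hI]
    exact hu.liouvilleI_add_one hne0 hne1 i j
  · rw [hJ, hJ]
    exact hu.comp_swap.liouvilleI_add_one (fun i j => hne0 j i) (fun i j => hne1 j i) j i
end

section
/- Let z : ℤ × ℤ → ℝ satisfy the discrete wave equation z(i+1,j+1) = z(i+1,j) + z(i,j+1) − z(i,j) for all (i,j) ∈ ℤ², and assume z(i+1,j) ≠ z(i,j) and z(i,j+1) ≠ z(i,j) for all (i,j). Define u(i,j) = z(i,j+1)·z(i+1,j) / ( (z(i+1,j) − z(i,j))·(z(i,j+1) − z(i,j)) ). Then u satisfies the discrete Liouville equation u(i+1,j+1)·u(i,j) = (u(i+1,j) − 1)·(u(i,j+1) − 1) for all (i,j) ∈ ℤ². -/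
/-!
Every solution of the discrete wave equation separates as `z (i, j) = x i + y j`: the equation says
that the `j`-increments of `z` do not depend on `i`. For such `z` the substitution becomes
`u (i, j) = (x i + y (j + 1)) (x (i + 1) + y j) / ((x (i + 1) - x i) (y (j + 1) - y j))`, and the
Liouville equation is a rational identity in `x i, x (i + 1), x (i + 2), y j, y (j + 1), y (j + 2)`.
-/

theorem Function.Periodic.eq_apply_zero_of_int {α : Type*} {f : ℤ → α}
    (h : Function.Periodic f 1) (n : ℤ) : f n = f 0 := by
  simpa using h.int_mul_eq n

theorem exists_add_of_discrete_wave {G : Type*} [AddCommGroup G] (z : ℤ × ℤ → G)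
    (heq : ∀ i j : ℤ, z (i + 1, j + 1) = z (i + 1, j) + z (i, j + 1) - z (i, j)) :
    ∃ x y : ℤ → G, ∀ i j : ℤ, z (i, j) = x i + y j := by
  have hincr : ∀ i j : ℤ, z (i, j + 1) - z (i, j) = z (0, j + 1) - z (0, j) := by
    intro i j
    have hper : Function.Periodic (fun i ↦ z (i, j + 1) - z (i, j)) 1 := by
      intro i
      simp only [heq]
      abel
    exact hper.eq_apply_zero_of_int i
  refine ⟨fun i ↦ z (i, 0) - z (0, 0), fun j ↦ z (0, j), fun i j ↦ ?_⟩
  have hper : Function.Periodic (fun j ↦ z (i, j) - z (0, j)) 1 :=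
    fun j ↦ sub_eq_sub_iff_sub_eq_sub.mp (hincr i j)
  exact eq_add_of_sub_eq (hper.eq_apply_zero_of_int j)

theorem discrete_liouville_of_add {K : Type*} [Field K] (x y : ℤ → K)
    (hx : ∀ i : ℤ, x (i + 1) ≠ x i) (hy : ∀ j : ℤ, y (j + 1) ≠ y j) (u : ℤ × ℤ → K)
    (hu : ∀ i j : ℤ,
      u (i, j) = (x i + y (j + 1)) * (x (i + 1) + y j) / ((x (i + 1) - x i) * (y (j + 1) - y j))) :
    ∀ i j : ℤ, u (i + 1, j + 1) * u (i, j) = (u (i + 1, j) - 1) * (u (i, j + 1) - 1) := by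
  intro i j
  have hx₀ := sub_ne_zero.mpr (hx i)
  have hx₁ := sub_ne_zero.mpr (hx (i + 1))
  have hy₀ := sub_ne_zero.mpr (hy j)
  have hy₁ := sub_ne_zero.mpr (hy (j + 1))
  rw [hu, hu, hu, hu]
  field_simp
  ring

/-- The substitution u = z_{0,1} z_{1,0} / ((z_{1,0} − z)(z_{0,1} − z)) maps
solutions of the discrete wave equation z_{1,1} = z_{1,0} + z_{0,1} − z into
solutions of the discrete Liouville equation u_{1,1}·u = (u_{1,0} − 1)(u_{0,1} − 1). -/
theorem stmt_11 (z : ℤ × ℤ → ℝ)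
    (heq : ∀ i j : ℤ, z (i + 1, j + 1) = z (i + 1, j) + z (i, j + 1) - z (i, j))
    (hne1 : ∀ i j : ℤ, z (i + 1, j) ≠ z (i, j))
    (hne2 : ∀ i j : ℤ, z (i, j + 1) ≠ z (i, j))
    (u : ℤ × ℤ → ℝ)
    (hu : ∀ i j : ℤ, u (i, j)
      = z (i, j + 1) * z (i + 1, j) / ((z (i + 1, j) - z (i, j)) * (z (i, j + 1) - z (i, j)))) :
    ∀ i j : ℤ,
      u (i + 1, j + 1) * u (i, j) = (u (i + 1, j) - 1) * (u (i, j + 1) - 1) := by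
  obtain ⟨x, y, hz⟩ := exists_add_of_discrete_wave z heq
  simp only [hz, add_sub_add_right_eq_sub, add_sub_add_left_eq_sub, ne_eq, add_left_inj,
    add_right_inj] at hu hne1 hne2
  refine discrete_liouville_of_add x y (fun i ↦ hne1 i 0) (hne2 0) u (fun i j ↦ ?_)
  rw [hu, mul_comm (x i + _)]
end

section
/- Let u : ℤ × ℤ → ℝ satisfy u(i,j) ≠ 0 and u(i,j) ≠ 1 for all (i,j), together with the discrete Liouville equation u(i+1,j+1)·u(i,j) = (u(i+1,j) − 1)·(u(i,j+1) − 1) for all (i,j) ∈ ℤ². Define v(i,j) = u(i+1,j)/(u(i,j) − 1). Then v satisfies, for all (i,j) ∈ ℤ², the equation v(i,j)·(v(i+1,j+1) − v(i+1,j))·(v(i,j+1) + 1) = (v(i+1,j) + 1)·(v(i,j+1) − v(i,j)). -/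
/-!
Write `a, b, c, d, e, f` for `u` at `(i,j), (i+1,j), (i,j+1), (i+1,j+1), (i+2,j), (i+2,j+1)`.
The Liouville equation on the square at `(i+1,j)` gives `v(i+1,j+1) = (e - 1)/b`, and on the
square at `(i,j)` it gives `(a - 1)(c - 1)(v(i,j+1) - v(i,j)) = 1 - c - d`. After these two
substitutions both sides equal `(1 - b - e)(c + d - 1)/((a - 1)(b - 1)(c - 1))`.
-/

section DiscreteLiouville

variable {K : Type*} [Field K]

theorem div_sub_one_eq_of_liouville {b d e f : K} (hb : b ≠ 0) (hd : d ≠ 1)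
    (h : f * b = (e - 1) * (d - 1)) : f / (d - 1) = (e - 1) / b := by
  rw [div_eq_div_iff (sub_ne_zero.2 hd) hb, h, mul_comm]

theorem div_sub_div_of_liouville {a b c d : K} (ha : a ≠ 1) (hc : c ≠ 1)
    (h : d * a = (b - 1) * (c - 1)) :
    d / (c - 1) - b / (a - 1) = (1 - c - d) / ((a - 1) * (c - 1)) := by
  have ha' := sub_ne_zero.2 ha
  have hc' := sub_ne_zero.2 hc
  field_simp
  linear_combination h

theorem liouville_transform_square {a b c d e f : K} (hb : b ≠ 0)
    (ha : a ≠ 1) (hb1 : b ≠ 1) (hc : c ≠ 1) (hd : d ≠ 1)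
    (h₁ : d * a = (b - 1) * (c - 1)) (h₂ : f * b = (e - 1) * (d - 1)) :
    b / (a - 1) * (f / (d - 1) - e / (b - 1)) * (d / (c - 1) + 1)
      = (e / (b - 1) + 1) * (d / (c - 1) - b / (a - 1)) := by
  rw [div_sub_one_eq_of_liouville hb hd h₂, div_sub_div_of_liouville ha hc h₁]
  have ha' := sub_ne_zero.2 ha
  have hb' := sub_ne_zero.2 hb1
  have hc' := sub_ne_zero.2 hc
  field_simp
  ring

end DiscreteLiouville

/-- The non-point invertible transformation v = u_{1,0}/(u − 1) maps solutions of
the discrete Liouville equation u_{1,1}·u = (u_{1,0} − 1)(u_{0,1} − 1) into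
solutions of v(v_{1,1} − v_{1,0})(v_{0,1} + 1) = (v_{1,0} + 1)(v_{0,1} − v). -/
theorem stmt_12 (u : ℤ × ℤ → ℝ)
    (hne0 : ∀ i j : ℤ, u (i, j) ≠ 0)
    (hne1 : ∀ i j : ℤ, u (i, j) ≠ 1)
    (heq : ∀ i j : ℤ,
      u (i + 1, j + 1) * u (i, j) = (u (i + 1, j) - 1) * (u (i, j + 1) - 1))
    (v : ℤ × ℤ → ℝ)
    (hv : ∀ i j : ℤ, v (i, j) = u (i + 1, j) / (u (i, j) - 1)) :
    ∀ i j : ℤ,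
      v (i, j) * (v (i + 1, j + 1) - v (i + 1, j)) * (v (i, j + 1) + 1)
        = (v (i + 1, j) + 1) * (v (i, j + 1) - v (i, j)) := by
  intro i j
  simp only [hv]
  exact liouville_transform_square (hne0 (i + 1) j) (hne1 i j) (hne1 (i + 1) j)
    (hne1 i (j + 1)) (hne1 (i + 1) (j + 1)) (heq i j) (heq (i + 1) j)
end

section
/- Let v : ℤ × ℤ → ℝ satisfy v(i,j) ≠ 0 for all (i,j) and the equation v(i,j)·(v(i+1,j+1) − v(i+1,j))·(v(i,j+1) + 1) = (v(i+1,j) + 1)·(v(i,j+1) − v(i,j)) for all (i,j) ∈ ℤ², and assume v(i,j+3) ≠ v(i,j+2) and v(i,j+1) ≠ v(i,j) for all (i,j). Define I(i,j) = v(i+1,j) + (v(i+1,j) + 1)/v(i,j) and J(i,j) = (v(i,j+3) − v(i,j+1))·(v(i,j+2) − v(i,j)) / ( (v(i,j+3) − v(i,j+2))·(v(i,j+1) − v(i,j)) ). Then for all (i,j) ∈ ℤ², I(i,j+1) = I(i,j) and J(i+1,j) = J(i,j). -/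
/-!
Along each row `i`, the equation says that `(v(i+1,j) + 1)(v(i,j) + 1) / v(i,j)` does not depend
on `j`; this quantity is `I + 1`. Hence, writing `κ` for the common value of `I` on row `i`, the next
row is the image of the current one under the Möbius map `x ↦ (κ x - 1) / (x + 1)` of determinant
`κ + 1`. `J` is a cross-ratio of four consecutive entries of a row, so it is preserved, except when
`κ = -1`: then `(v(i+1,j) + 1)(v(i,j) + 1) = 0`, the value `-1` alternates between the two rows, and
both cross-ratios vanish.
-/

section CrossRatio

variable {K : Type*} [Field K]

def crossRatio (x₀ x₁ x₂ x₃ : K) : K :=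
  (x₃ - x₁) * (x₂ - x₀) / ((x₃ - x₂) * (x₁ - x₀))

theorem mobius_denom_ne_zero {p q r s a b : K} (hdet : p * s - q * r ≠ 0)
    (h : b * (r * a + s) = p * a + q) : r * a + s ≠ 0 := by
  intro hD
  rw [hD, mul_zero] at h
  exact hdet (by linear_combination p * hD + r * h)

theorem mobius_sub_mul_denom {p q r s a a' b b' : K}
    (h : b * (r * a + s) = p * a + q) (h' : b' * (r * a' + s) = p * a' + q) :
    (b - b') * ((r * a + s) * (r * a' + s)) = (p * s - q * r) * (a - a') := by
  linear_combination (r * a' + s) * h - (r * a + s) * h'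

theorem crossRatio_mobius {ι : Type*} {p q r s : K} (hdet : p * s - q * r ≠ 0) {a b : ι → K}
    (hb : ∀ k, b k * (r * a k + s) = p * a k + q) (k₀ k₁ k₂ k₃ : ι) :
    crossRatio (b k₀) (b k₁) (b k₂) (b k₃) = crossRatio (a k₀) (a k₁) (a k₂) (a k₃) := by
  set D : ι → K := fun k => r * a k + s
  have hD : ∀ k, D k ≠ 0 := fun k => mobius_denom_ne_zero hdet (hb k)
  have hsub : ∀ k l, b k - b l = (p * s - q * r) * (a k - a l) / (D k * D l) := fun k l =>
    eq_div_of_mul_eq (mul_ne_zero (hD k) (hD l)) (mobius_sub_mul_denom (hb k) (hb l))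
  have hD' : D k₀ * D k₁ * D k₂ * D k₃ ≠ 0 :=
    mul_ne_zero (mul_ne_zero (mul_ne_zero (hD k₀) (hD k₁)) (hD k₂)) (hD k₃)
  set c := (p * s - q * r) ^ 2 / (D k₀ * D k₁ * D k₂ * D k₃)
  have hc : c ≠ 0 := div_ne_zero (pow_ne_zero 2 hdet) hD'
  have hnum : (b k₃ - b k₁) * (b k₂ - b k₀) = c * ((a k₃ - a k₁) * (a k₂ - a k₀)) := by
    rw [hsub, hsub]; field_simp; ring
  have hden : (b k₃ - b k₂) * (b k₁ - b k₀) = c * ((a k₃ - a k₂) * (a k₁ - a k₀)) := by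
    rw [hsub, hsub]; field_simp; ring
  rw [crossRatio, crossRatio, hnum, hden, mul_div_mul_left _ _ hc]

theorem crossRatio_eq_zero_of_alternating {a b : ℤ → K} {x y : K} (h : ∀ k, a k = x ∨ b k = y)
    (ha : ∀ k, a (k + 1) ≠ a k) (hb : ∀ k, b (k + 1) ≠ b k) (j : ℤ) :
    crossRatio (a j) (a (j + 1)) (a (j + 2)) (a (j + 3)) = 0 := by
  have hsucc : ∀ k, a k = x → a (k + 2) = x := fun k hk => by
    have hb₁ : b (k + 1) = y := (h (k + 1)).resolve_left (hk ▸ ha k)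
    have hb₂ : b (k + 1 + 1) ≠ y := hb₁ ▸ hb (k + 1)
    simpa [add_assoc] using (h (k + 1 + 1)).resolve_right hb₂
  unfold crossRatio
  rcases h j with hj | hj
  · rw [hsucc j hj, hj, sub_self, mul_zero, zero_div]
  · have ha₁ : a (j + 1) = x := (h (j + 1)).resolve_right (hj ▸ hb j)
    rw [show j + 3 = j + 1 + 2 by ring, hsucc _ ha₁, ha₁, sub_self, zero_mul, zero_div]

end CrossRatio

theorem add_add_one_div_eq_add_add_one_div {a a' b b' : ℝ} (ha : a ≠ 0) (ha' : a' ≠ 0)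
    (h : a * (b' - b) * (a' + 1) = (b + 1) * (a' - a)) :
    b' + (b' + 1) / a' = b + (b + 1) / a := by
  field_simp
  linear_combination h

theorem stmt_13_general (v : ℤ × ℤ → ℝ)
    (hne0 : ∀ i j : ℤ, v (i, j) ≠ 0)
    (heq : ∀ i j : ℤ,
      v (i, j) * (v (i + 1, j + 1) - v (i + 1, j)) * (v (i, j + 1) + 1)
        = (v (i + 1, j) + 1) * (v (i, j + 1) - v (i, j)))
    (hne1 : ∀ i j : ℤ, v (i, j + 1) ≠ v (i, j))
    (I J : ℤ × ℤ → ℝ)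
    (hI : ∀ i j : ℤ, I (i, j) = v (i + 1, j) + (v (i + 1, j) + 1) / v (i, j))
    (hJ : ∀ i j : ℤ, J (i, j)
      = (v (i, j + 3) - v (i, j + 1)) * (v (i, j + 2) - v (i, j))
        / ((v (i, j + 3) - v (i, j + 2)) * (v (i, j + 1) - v (i, j)))) :
    ∀ i j : ℤ, I (i, j + 1) = I (i, j) ∧ J (i + 1, j) = J (i, j) := by
  have hIsucc : ∀ i j, I (i, j + 1) = I (i, j) := fun i j => by
    rw [hI, hI]
    exact add_add_one_div_eq_add_add_one_div (hne0 i j) (hne0 i (j + 1)) (heq i j)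
  refine fun i j => ⟨hIsucc i j, ?_⟩
  set κ := I (i, 0)
  have hmob : ∀ k, v (i + 1, k) * (1 * v (i, k) + 1) = κ * v (i, k) + -1 := fun k => by
    have hk : I (i, k) = κ := by
      simpa using (show Function.Periodic (fun k => I (i, k)) 1 from hIsucc i).int_mul_eq k
    rw [hI, add_div' _ _ _ (hne0 i k), div_eq_iff (hne0 i k)] at hk
    linear_combination hk
  rw [hJ, hJ]
  by_cases hdet : κ * 1 - -1 * 1 = 0
  · have halt : ∀ k, v (i, k) = -1 ∨ v (i + 1, k) = -1 := fun k => by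
      have hk : (v (i, k) + 1) * (v (i + 1, k) + 1) = 0 := by
        linear_combination hmob k + v (i, k) * hdet
      rcases mul_eq_zero.1 hk with h | h
      exacts [.inl (eq_neg_of_add_eq_zero_left h), .inr (eq_neg_of_add_eq_zero_left h)]
    exact (crossRatio_eq_zero_of_alternating (fun k => (halt k).symm) (hne1 _) (hne1 _) j).trans
      (crossRatio_eq_zero_of_alternating halt (hne1 _) (hne1 _) j).symm
  · exact crossRatio_mobius hdet (a := fun k => v (i, k)) (b := fun k => v (i + 1, k)) hmob _ _ _ _

/-- The functions I and J are, respectively, an i-integral and a j-integral of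
the equation v(v_{1,1} − v_{1,0})(v_{0,1} + 1) = (v_{1,0} + 1)(v_{0,1} − v). -/
theorem stmt_13 (v : ℤ × ℤ → ℝ)
    (hne0 : ∀ i j : ℤ, v (i, j) ≠ 0)
    (heq : ∀ i j : ℤ,
      v (i, j) * (v (i + 1, j + 1) - v (i + 1, j)) * (v (i, j + 1) + 1)
        = (v (i + 1, j) + 1) * (v (i, j + 1) - v (i, j)))
    (hne3 : ∀ i j : ℤ, v (i, j + 3) ≠ v (i, j + 2))
    (hne1 : ∀ i j : ℤ, v (i, j + 1) ≠ v (i, j))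
    (I J : ℤ × ℤ → ℝ)
    (hI : ∀ i j : ℤ, I (i, j) = v (i + 1, j) + (v (i + 1, j) + 1) / v (i, j))
    (hJ : ∀ i j : ℤ, J (i, j)
      = (v (i, j + 3) - v (i, j + 1)) * (v (i, j + 2) - v (i, j))
        / ((v (i, j + 3) - v (i, j + 2)) * (v (i, j + 1) - v (i, j)))) :
    ∀ i j : ℤ, I (i, j + 1) = I (i, j) ∧ J (i + 1, j) = J (i, j) :=
  stmt_13_general v hne0 heq hne1 I J hI hJ
end

section
/- Let α : ℤ → ℝ and β : ℤ → ℝ be sequences such that α(i) + β(j) ≠ 0 for all i, j and α(i+2) ≠ α(i+1) for all i. Define v(i,j) = (α(i+2) + β(j))·(α(i+1) − α(i)) / ( (α(i) + β(j))·(α(i+2) − α(i+1)) ). Then v satisfies, for all (i,j) ∈ ℤ², the equation v(i,j)·(v(i+1,j+1) − v(i+1,j))·(v(i,j+1) + 1) = (v(i+1,j) + 1)·(v(i,j+1) − v(i,j)). -/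
/-!
Write z(i,j) = α(i) + β(j), a solution of the discrete wave equation, and
u = z_{1,0} / (z_{1,0} - z). Then v = u_{1,0} / (u - 1). Because z_{1,0} - z = α(i+1) - α(i)
does not depend on j, u satisfies the first-order relation u (u_{1,1} - 1) = (u_{1,0} - 1) u_{0,1},
and the equation for v is a rational consequence of this relation at (i,j) and (i+1,j).
-/

section

variable {K : Type*} [Field K]

theorem solves_of_eq_div_sub_one (u : ℤ → ℤ → K) (v : ℤ × ℤ → K)
    (hu₀ : ∀ i j, u i j ≠ 0) (hu₁ : ∀ i j, u i j ≠ 1)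
    (hu : ∀ i j, u i j * (u (i + 1) (j + 1) - 1) = (u (i + 1) j - 1) * u i (j + 1))
    (hv : ∀ i j, v (i, j) = u (i + 1) j / (u i j - 1)) (i j : ℤ) :
    v (i, j) * (v (i + 1, j + 1) - v (i + 1, j)) * (v (i, j + 1) + 1)
      = (v (i + 1, j) + 1) * (v (i, j + 1) - v (i, j)) := by
  have h₀₀ := hu₀ i j
  have h₀₁ := hu₀ i (j + 1)
  have h₁₀ := hu₀ (i + 1) j
  have h₀₀' := sub_ne_zero.2 (hu₁ i j)
  have h₀₁' := sub_ne_zero.2 (hu₁ i (j + 1))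
  have h₁₀' := sub_ne_zero.2 (hu₁ (i + 1) j)
  have h₁₁' := sub_ne_zero.2 (hu₁ (i + 1) (j + 1))
  -- the relation expresses row j + 1 of u through row j
  have e₀ : u (i + 1) (j + 1) = 1 + (u (i + 1) j - 1) * u i (j + 1) / u i j := by
    field_simp; linear_combination hu i j
  have e₁ : u (i + 1 + 1) (j + 1)
      = 1 + (u (i + 1 + 1) j - 1) * u (i + 1) (j + 1) / u (i + 1) j := by
    field_simp; linear_combination hu (i + 1) j
  simp only [hv]
  rw [e₁]
  rw [e₀] at h₁₁' ⊢
  field_simp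
  ring

def forwardRatio (α β : ℤ → K) (i j : ℤ) : K := (α (i + 1) + β j) / (α (i + 1) - α i)

variable {α β : ℤ → K}

theorem forwardRatio_sub_one {i : ℤ} (hα : α (i + 1) ≠ α i) (j : ℤ) :
    forwardRatio α β i j - 1 = (α i + β j) / (α (i + 1) - α i) := by
  have := sub_ne_zero.2 hα
  rw [forwardRatio]
  field_simp
  ring

theorem forwardRatio_ne_zero {i j : ℤ} (hα : α (i + 1) ≠ α i) (h : α (i + 1) + β j ≠ 0) :
    forwardRatio α β i j ≠ 0 :=
  div_ne_zero h (sub_ne_zero.2 hα)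

theorem forwardRatio_ne_one {i j : ℤ} (hα : α (i + 1) ≠ α i) (h : α i + β j ≠ 0) :
    forwardRatio α β i j ≠ 1 := by
  rw [← sub_ne_zero, forwardRatio_sub_one hα]
  exact div_ne_zero h (sub_ne_zero.2 hα)

theorem forwardRatio_mul_sub_one {i : ℤ} (hα : α (i + 1 + 1) ≠ α (i + 1)) (j : ℤ) :
    forwardRatio α β i j * (forwardRatio α β (i + 1) (j + 1) - 1)
      = (forwardRatio α β (i + 1) j - 1) * forwardRatio α β i (j + 1) := by
  rw [forwardRatio_sub_one hα, forwardRatio_sub_one hα, forwardRatio, forwardRatio]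
  ring

theorem div_forwardRatio_sub_one {i : ℤ} (hα : α (i + 1) ≠ α i) (j : ℤ) :
    forwardRatio α β (i + 1) j / (forwardRatio α β i j - 1)
      = (α (i + 2) + β j) * (α (i + 1) - α i) / ((α i + β j) * (α (i + 2) - α (i + 1))) := by
  rw [forwardRatio_sub_one hα, forwardRatio, div_div_div_eq, add_assoc, one_add_one_eq_two,
    mul_comm (α (i + 2) - α (i + 1))]

end

/-- The two-parameter family built from arbitrary sequences α, β gives explicit
solutions of the equation v(v_{1,1} − v_{1,0})(v_{0,1} + 1) = (v_{1,0} + 1)(v_{0,1} − v). -/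
theorem stmt_14 (α β : ℤ → ℝ)
    (hne : ∀ i j : ℤ, α i + β j ≠ 0)
    (hα : ∀ i : ℤ, α (i + 2) ≠ α (i + 1))
    (v : ℤ × ℤ → ℝ)
    (hv : ∀ i j : ℤ, v (i, j)
      = (α (i + 2) + β j) * (α (i + 1) - α i) / ((α i + β j) * (α (i + 2) - α (i + 1)))) :
    ∀ i j : ℤ,
      v (i, j) * (v (i + 1, j + 1) - v (i + 1, j)) * (v (i, j + 1) + 1)
        = (v (i + 1, j) + 1) * (v (i, j + 1) - v (i, j)) := by
  have hα' (i : ℤ) : α (i + 1) ≠ α i := by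
    simpa [show i - 1 + 2 = i + 1 by ring] using hα (i - 1)
  refine solves_of_eq_div_sub_one (forwardRatio α β) v
    (fun i j => forwardRatio_ne_zero (hα' i) (hne _ _))
    (fun i j => forwardRatio_ne_one (hα' i) (hne i j))
    (fun i => forwardRatio_mul_sub_one (hα' (i + 1)))
    (fun i j => ?_)
  rw [hv, div_forwardRatio_sub_one (hα' i)]
end

section
/- Let v : ℤ × ℤ → ℝ satisfy the equation v(i+1,j+1)·v(i,j) = v(i+1,j)·v(i,j+1) − 1 for all (i,j) ∈ ℤ². Define u(i,j) = v(i+1,j)·v(i,j+1). Then u satisfies the discrete Liouville equation u(i+1,j+1)·u(i,j) = (u(i+1,j) − 1)·(u(i,j+1) − 1) for all (i,j) ∈ ℤ². -/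
/-! The equation for `v` says exactly that `v₁,₀ v₀,₁ - 1 = v₁,₁ v`. Applied at the two
neighbouring cells it factors `u₁,₀ - 1 = v₂,₁ v₁,₀` and `u₀,₁ - 1 = v₁,₂ v₀,₁`, and the product
of these two factorizations is `u₁,₁ u = v₂,₁ v₁,₂ · v₁,₀ v₀,₁`. -/

/-- The non-invertible transformation u = v_{1,0} v_{0,1} maps solutions of the
other discrete Liouville equation v_{1,1}·v = v_{1,0}·v_{0,1} − 1 into solutions
of the discrete Liouville equation u_{1,1}·u = (u_{1,0} − 1)(u_{0,1} − 1). -/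
theorem stmt_15 (v : ℤ × ℤ → ℝ)
    (heq : ∀ i j : ℤ,
      v (i + 1, j + 1) * v (i, j) = v (i + 1, j) * v (i, j + 1) - 1)
    (u : ℤ × ℤ → ℝ)
    (hu : ∀ i j : ℤ, u (i, j) = v (i + 1, j) * v (i, j + 1)) :
    ∀ i j : ℤ,
      u (i + 1, j + 1) * u (i, j) = (u (i + 1, j) - 1) * (u (i, j + 1) - 1) := by
  intro i j
  have right : u (i + 1, j) - 1 = v (i + 1 + 1, j + 1) * v (i + 1, j) := by
    rw [hu, heq]
  have up : u (i, j + 1) - 1 = v (i + 1, j + 1 + 1) * v (i, j + 1) := by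
    rw [hu, heq]
  rw [right, up, hu, hu]
  ring
end

section
/- Let u : ℤ → ℝ → ℝ be such that each u i is twice differentiable, u i x ≠ 0 for all i ∈ ℤ and x ∈ ℝ, and u satisfies the semi-discrete Liouville equation: for all i ∈ ℤ and x ∈ ℝ, (u (i+1))'(x) = u (i+1) x · ( u (i+1) x + (u i)'(x)/(u i x) + u i x ). Define X i x = 2·(u i)''(x)/(u i x) − 3·((u i)'(x))²/(u i x)² − (u i x)² and I i x = (1 + u (i+1) x / u (i+2) x)·(1 + u (i+1) x / u i x). Then for all i ∈ ℤ and x ∈ ℝ, X (i+1) x = X i x, and for each i the function x ↦ I i x is constant (its derivative vanishes identically). -/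
/-!
Both identities are computations with the equation. Differentiating `w' = w (w + v'/v + v)`
expresses `w''` through `v, v', v'', w, w'`, and substituting it and `w'` into
`2 w''/w - 3 (w'/w)^2 - w^2` gives the same expression in `v`. For `I`, the equation for the
pairs `(v, w)` and `(w, z)` makes the logarithmic derivatives of `1 + w/z` and `1 + w/v`
equal to `-w` and `w`, so they cancel.
-/

namespace SemiDiscreteLiouville

/-- The equation linking `v = u i` and its shift `w = u (i+1)`. -/
def IsShift (v w : ℝ → ℝ) : Prop :=
  ∀ x, deriv w x = w x * (w x + deriv v x / v x + v x)

noncomputable def iIntegral (v : ℝ → ℝ) (x : ℝ) : ℝ :=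
  2 * deriv (deriv v) x / v x - 3 * deriv v x ^ 2 / v x ^ 2 - v x ^ 2

noncomputable def xIntegral (v w z : ℝ → ℝ) (x : ℝ) : ℝ :=
  (1 + w x / z x) * (1 + w x / v x)

variable {v w z : ℝ → ℝ} {x : ℝ}

theorem IsShift.hasDerivAt_deriv (hvw : IsShift v w) (hv : DifferentiableAt ℝ v x)
    (hv' : DifferentiableAt ℝ (deriv v) x) (hw : DifferentiableAt ℝ w x) (hv0 : v x ≠ 0) :
    HasDerivAt (deriv w)
      (deriv w x * (w x + deriv v x / v x + v x)
        + w x * (deriv w x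
          + (deriv (deriv v) x * v x - deriv v x * deriv v x) / v x ^ 2 + deriv v x)) x :=
  (hw.hasDerivAt.mul ((hw.hasDerivAt.add (hv'.hasDerivAt.div hv.hasDerivAt hv0)).add
    hv.hasDerivAt)).congr_of_eventuallyEq (Filter.Eventually.of_forall hvw)

theorem IsShift.iIntegral_eq (hvw : IsShift v w) (hv : DifferentiableAt ℝ v x)
    (hv' : DifferentiableAt ℝ (deriv v) x) (hw : DifferentiableAt ℝ w x) (hv0 : v x ≠ 0)
    (hw0 : w x ≠ 0) :
    iIntegral w x = iIntegral v x := by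
  unfold iIntegral
  rw [(hvw.hasDerivAt_deriv hv hv' hw hv0).deriv, hvw x]
  field_simp
  ring

theorem hasDerivAt_xIntegral (hvw : IsShift v w) (hwz : IsShift w z)
    (hv : DifferentiableAt ℝ v x) (hw : DifferentiableAt ℝ w x) (hz : DifferentiableAt ℝ z x)
    (hv0 : v x ≠ 0) (hw0 : w x ≠ 0) (hz0 : z x ≠ 0) :
    HasDerivAt (xIntegral v w z) 0 x := by
  refine (((hw.hasDerivAt.div hz.hasDerivAt hz0).const_add 1).mul
    ((hw.hasDerivAt.div hv.hasDerivAt hv0).const_add 1)).congr_deriv ?_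
  simp only [Pi.div_apply]
  rw [hwz x, hvw x]
  field_simp
  ring

end SemiDiscreteLiouville

open SemiDiscreteLiouville in
/-- X and I are, respectively, an i-integral and an x-integral of the
semi-discrete Liouville equation (u₁)ₓ = u₁(u₁ + uₓ/u + u). -/
theorem stmt_16 (u : ℤ → ℝ → ℝ)
    (hdiff : ∀ i : ℤ, Differentiable ℝ (u i))
    (hdiff2 : ∀ i : ℤ, Differentiable ℝ (deriv (u i)))
    (hne : ∀ (i : ℤ) (x : ℝ), u i x ≠ 0)
    (heq : ∀ (i : ℤ) (x : ℝ),
      deriv (u (i + 1)) x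
        = u (i + 1) x * (u (i + 1) x + deriv (u i) x / u i x + u i x))
    (X I : ℤ → ℝ → ℝ)
    (hX : ∀ (i : ℤ) (x : ℝ), X i x
      = 2 * deriv (deriv (u i)) x / u i x
        - 3 * (deriv (u i) x) ^ 2 / (u i x) ^ 2 - (u i x) ^ 2)
    (hI : ∀ (i : ℤ) (x : ℝ), I i x
      = (1 + u (i + 1) x / u (i + 2) x) * (1 + u (i + 1) x / u i x)) :
    (∀ (i : ℤ) (x : ℝ), X (i + 1) x = X i x)
      ∧ (∀ (i : ℤ) (x : ℝ), deriv (I i) x = 0) := by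
  have hshift (i : ℤ) : IsShift (u i) (u (i + 1)) := heq i
  refine ⟨fun i x => ?_, fun i x => ?_⟩
  · rw [hX, hX]
    exact (hshift i).iIntegral_eq (hdiff i x) (hdiff2 i x) (hdiff (i + 1) x) (hne i x)
      (hne (i + 1) x)
  · have hI' : I i = xIntegral (u i) (u (i + 1)) (u (i + 2)) := funext (hI i)
    have hshift' : IsShift (u (i + 1)) (u (i + 2)) := by
      simpa [add_assoc, one_add_one_eq_two] using hshift (i + 1)
    rw [hI']
    exact (hasDerivAt_xIntegral (hshift i) hshift' (hdiff i x) (hdiff (i + 1) x)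
      (hdiff (i + 2) x) (hne i x) (hne (i + 1) x) (hne (i + 2) x)).deriv
end

section
/- Let z : ℤ → ℝ → ℝ be such that each z i is twice differentiable, and suppose: (z (i+1))'(x) = (z i)'(x) for all i ∈ ℤ and x ∈ ℝ; z i x ≠ 0, (z i)'(x) ≠ 0, and z (i+1) x ≠ z i x for all i, x. Define u i x = (z (i+1) x − z i x)·(z i)'(x) / (z (i+1) x · z i x). Then u satisfies the semi-discrete Liouville equation: for all i ∈ ℤ and x ∈ ℝ, (u (i+1))'(x) = u (i+1) x · ( u (i+1) x + (u i)'(x)/(u i x) + u i x ). -/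
/-!
Since all `z i` share the derivative `w := (z i)'`, we have `u i = w · (1/z i - 1/z (i+1))`, and
`(1/z)' = -w/z²` gives the logarithmic derivative
`(u i)'/(u i) = w'/w - w · (1/z i + 1/z (i+1))`.
Subtracting this identity at `i` from the one at `i + 1` leaves
`(u (i+1))'/(u (i+1)) - (u i)'/(u i) = w/z i - w/z (i+2) = u i + u (i+1)`,
which is the semi-discrete Liouville equation.
-/

noncomputable def liouvilleSubst (f g : ℝ → ℝ) (x : ℝ) : ℝ :=
  (g x - f x) * deriv f x / (g x * f x)

section

variable {f g : ℝ → ℝ} {x : ℝ}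

lemma liouvilleSubst_eq (hfx : f x ≠ 0) (hgx : g x ≠ 0) :
    liouvilleSubst f g x = deriv f x * (1 / f x - 1 / g x) := by
  unfold liouvilleSubst
  field_simp

lemma liouvilleSubst_ne_zero (hfx : f x ≠ 0) (hgx : g x ≠ 0) (hf'x : deriv f x ≠ 0)
    (hfg : g x ≠ f x) : liouvilleSubst f g x ≠ 0 :=
  div_ne_zero (mul_ne_zero (sub_ne_zero.mpr hfg) hf'x) (mul_ne_zero hgx hfx)

lemma hasDerivAt_liouvilleSubst (hf : DifferentiableAt ℝ f x)
    (hf' : DifferentiableAt ℝ (deriv f) x) (hg : HasDerivAt g (deriv f x) x)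
    (hfx : f x ≠ 0) (hgx : g x ≠ 0) (hf'x : deriv f x ≠ 0) :
    HasDerivAt (liouvilleSubst f g)
      (liouvilleSubst f g x *
        (deriv (deriv f) x / deriv f x - deriv f x * (1 / f x + 1 / g x))) x := by
  have hnum : HasDerivAt (fun x => (g x - f x) * deriv f x)
      ((deriv f x - deriv f x) * deriv f x + (g x - f x) * deriv (deriv f) x) x :=
    (hg.sub hf.hasDerivAt).mul hf'.hasDerivAt
  have hden : HasDerivAt (fun x => g x * f x) (deriv f x * f x + g x * deriv f x) x :=
    hg.mul hf.hasDerivAt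
  refine (hnum.div hden (mul_ne_zero hgx hfx)).congr_deriv ?_
  unfold liouvilleSubst
  field_simp
  ring

end

/-- The substitution u = (z₁ − z)·zₓ/(z₁·z) maps solutions of the semi-discrete
wave equation (z₁)ₓ = zₓ into solutions of the semi-discrete Liouville equation
(u₁)ₓ = u₁(u₁ + uₓ/u + u). -/
theorem stmt_17 (z : ℤ → ℝ → ℝ)
    (hdiff : ∀ i : ℤ, Differentiable ℝ (z i))
    (hdiff2 : ∀ i : ℤ, Differentiable ℝ (deriv (z i)))
    (hwave : ∀ (i : ℤ) (x : ℝ), deriv (z (i + 1)) x = deriv (z i) x)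
    (hne0 : ∀ (i : ℤ) (x : ℝ), z i x ≠ 0)
    (hnex : ∀ (i : ℤ) (x : ℝ), deriv (z i) x ≠ 0)
    (hne1 : ∀ (i : ℤ) (x : ℝ), z (i + 1) x ≠ z i x)
    (u : ℤ → ℝ → ℝ)
    (hu : ∀ (i : ℤ) (x : ℝ),
      u i x = (z (i + 1) x - z i x) * deriv (z i) x / (z (i + 1) x * z i x)) :
    ∀ (i : ℤ) (x : ℝ),
      deriv (u (i + 1)) x
        = u (i + 1) x * (u (i + 1) x + deriv (u i) x / u i x + u i x) := by
  intro i x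
  have hu_eq (j : ℤ) : u j = liouvilleSubst (z j) (z (j + 1)) := funext (hu j)
  have hlogDeriv (j : ℤ) : deriv (u j) x = u j x * (deriv (deriv (z j)) x / deriv (z j) x
      - deriv (z j) x * (1 / z j x + 1 / z (j + 1) x)) := by
    rw [hu_eq]
    exact (hasDerivAt_liouvilleSubst (hdiff j x) (hdiff2 j x)
      (hwave j x ▸ (hdiff (j + 1) x).hasDerivAt) (hne0 j x) (hne0 (j + 1) x) (hnex j x)).deriv
  have hu_ne : u i x ≠ 0 := by
    rw [hu_eq]
    exact liouvilleSubst_ne_zero (hne0 i x) (hne0 (i + 1) x) (hnex i x) (hne1 i x)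
  have hwave2 : deriv (deriv (z (i + 1))) x = deriv (deriv (z i)) x := by
    rw [funext (hwave i)]
  rw [hlogDeriv, hlogDeriv, mul_div_cancel_left₀ _ hu_ne, hu_eq, hu_eq,
    liouvilleSubst_eq (hne0 (i + 1) x) (hne0 (i + 1 + 1) x),
    liouvilleSubst_eq (hne0 i x) (hne0 (i + 1) x), hwave, hwave2]
  ring
end

section
/- Let u : ℤ → ℝ → ℝ be such that each u i is twice differentiable, u i x ≠ 0 for all i ∈ ℤ and x ∈ ℝ, and u satisfies the semi-discrete Liouville equation: for all i ∈ ℤ and x ∈ ℝ, (u (i+1))'(x) = u (i+1) x · ( u (i+1) x + (u i)'(x)/(u i x) + u i x ). Define v i x = ( (u i)'(x)/(u i x) − u i x )/2. Then for every i ∈ ℤ the function x ↦ v (i+1) x − v i x is differentiable and, for all x ∈ ℝ, (v (i+1) − v i)'(x) = (v (i+1) x)² − (v i x)². -/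
/-! Writing `v = (u'/u - u)/2`, the Liouville equation says `u₁'/u₁ = u₁ + u'/u + u`, so
`v₁ - v = u` and `v₁ + v = u'/u`. Hence `v₁ - v` is differentiable, and
`(v₁ - v)' = u' = (v₁ - v)(v₁ + v) = v₁² - v²`. -/

section LiouvilleAlgebra

variable {K : Type*} [Field K] [CharZero K] {u u₁ du du₁ : K}

theorem liouville_sub_eq (hu₁ : u₁ ≠ 0) (h : du₁ = u₁ * (u₁ + du / u + u)) :
    (du₁ / u₁ - u₁) / 2 - (du / u - u) / 2 = u := by
  rw [h, mul_div_cancel_left₀ _ hu₁]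
  ring

theorem liouville_add_eq (hu₁ : u₁ ≠ 0) (h : du₁ = u₁ * (u₁ + du / u + u)) :
    (du₁ / u₁ - u₁) / 2 + (du / u - u) / 2 = du / u := by
  rw [h, mul_div_cancel_left₀ _ hu₁]
  ring

theorem liouville_sq_sub_sq (hu : u ≠ 0) (hu₁ : u₁ ≠ 0) (h : du₁ = u₁ * (u₁ + du / u + u)) :
    ((du₁ / u₁ - u₁) / 2) ^ 2 - ((du / u - u) / 2) ^ 2 = du := by
  rw [sq_sub_sq, liouville_add_eq hu₁ h, liouville_sub_eq hu₁ h, div_mul_cancel₀ _ hu]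

end LiouvilleAlgebra

theorem stmt_18_general (u : ℤ → ℝ → ℝ)
    (hdiff : ∀ i : ℤ, Differentiable ℝ (u i))
    (hne : ∀ (i : ℤ) (x : ℝ), u i x ≠ 0)
    (heq : ∀ (i : ℤ) (x : ℝ),
      deriv (u (i + 1)) x
        = u (i + 1) x * (u (i + 1) x + deriv (u i) x / u i x + u i x))
    (v : ℤ → ℝ → ℝ)
    (hv : ∀ (i : ℤ) (x : ℝ), v i x = (deriv (u i) x / u i x - u i x) / 2) :
    ∀ i : ℤ, Differentiable ℝ (fun x => v (i + 1) x - v i x) ∧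
      ∀ x : ℝ, deriv (fun y => v (i + 1) y - v i y) x
        = (v (i + 1) x) ^ 2 - (v i x) ^ 2 := by
  intro i
  have hsub : (fun x => v (i + 1) x - v i x) = u i := funext fun x => by
    rw [hv, hv]
    exact liouville_sub_eq (hne (i + 1) x) (heq i x)
  refine ⟨hsub ▸ hdiff i, fun x => ?_⟩
  rw [hsub, hv, hv]
  exact (liouville_sq_sub_sq (hne i x) (hne (i + 1) x) (heq i x)).symm

/-- The invertible transformation v = (uₓ/u − u)/2 maps solutions of the
semi-discrete Liouville equation (u₁)ₓ = u₁(u₁ + uₓ/u + u) into solutions of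
the coupled Riccati equations (v₁ − v)ₓ = v₁² − v². -/
theorem stmt_18 (u : ℤ → ℝ → ℝ)
    (hdiff : ∀ i : ℤ, Differentiable ℝ (u i))
    (hdiff2 : ∀ i : ℤ, Differentiable ℝ (deriv (u i)))
    (hne : ∀ (i : ℤ) (x : ℝ), u i x ≠ 0)
    (heq : ∀ (i : ℤ) (x : ℝ),
      deriv (u (i + 1)) x
        = u (i + 1) x * (u (i + 1) x + deriv (u i) x / u i x + u i x))
    (v : ℤ → ℝ → ℝ)
    (hv : ∀ (i : ℤ) (x : ℝ), v i x = (deriv (u i) x / u i x - u i x) / 2) :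
    ∀ i : ℤ, Differentiable ℝ (fun x => v (i + 1) x - v i x) ∧
      ∀ x : ℝ, deriv (fun y => v (i + 1) y - v i y) x
        = (v (i + 1) x) ^ 2 - (v i x) ^ 2 :=
  stmt_18_general u hdiff hne heq v hv
end

section
/- Let B, C ∈ ℝ and let u : ℤ → ℝ → ℝ be such that each u i is differentiable, C·exp(2·u (i+1) x) + B·exp(u (i+1) x + u i x) + C·exp(2·u i x) ≥ 0 for all i ∈ ℤ and x ∈ ℝ, and u satisfies: for all i, x, (u (i+1))'(x) = (u i)'(x) + √( C·exp(2·u (i+1) x) + B·exp(u (i+1) x + u i x) + C·exp(2·u i x) ). Define w i x = exp(u (i+1) x − u i x). Then C·(w i x)² + B·(w i x) + C ≥ 0 for all i, x, each w i is differentiable, and for all i ∈ ℤ and x ∈ ℝ, (w (i+1))'(x) · √( C·(w i x)² + B·(w i x) + C ) = w (i+1) x · (w i)'(x) · √( C·(w (i+1) x)² + B·(w (i+1) x) + C ). -/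
/-!
With `S = C e^{2u₁} + B e^{u₁+u} + C e^{2u}` and `w = e^{u₁-u}`, one has
`C w² + B w + C = S e^{-2u}`, so `√(C w² + B w + C) = √S e^{-u}`, while the equation for `u`
says exactly `wₓ = w √S`. Substituting both into the two sides of the `w`-equation turns each
into `w₁ √S₁ √S e^{-u}`, using `w e^{-u₁} = e^{-u}`.
-/

open Real

lemma quadratic_exp_sub_eq (B C a b : ℝ) :
    C * exp (a - b) ^ 2 + B * exp (a - b) + C
      = (C * exp (2 * a) + B * exp (a + b) + C * exp (2 * b)) * exp (-b) ^ 2 := by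
  simp only [exp_sub, exp_neg, exp_add, two_mul]
  field_simp

lemma sqrt_quadratic_exp_sub_eq (B C a b : ℝ) :
    √(C * exp (a - b) ^ 2 + B * exp (a - b) + C)
      = √(C * exp (2 * a) + B * exp (a + b) + C * exp (2 * b)) * exp (-b) := by
  rw [quadratic_exp_sub_eq, sqrt_mul' _ (sq_nonneg _), sqrt_sq (exp_pos _).le]

lemma hasDerivAt_exp_sub_of_deriv_eq_add {f g : ℝ → ℝ} {x s : ℝ}
    (hf : DifferentiableAt ℝ f x) (hg : DifferentiableAt ℝ g x)
    (h : deriv f x = deriv g x + s) :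
    HasDerivAt (fun y => exp (f y - g y)) (exp (f x - g x) * s) x := by
  have hs : deriv f x - deriv g x = s := by rw [h]; ring
  rw [← hs]
  exact (hf.hasDerivAt.sub hg.hasDerivAt).exp

/-- The invertible transformation w = e^{u₁ − u} maps solutions of the
Habibullin–Zheltukhina equation (u₁)ₓ = uₓ + √(C e^{2u₁} + B e^{u₁+u} + C e^{2u})
into solutions of (w₁)ₓ·√(C w² + B w + C) = w₁·wₓ·√(C w₁² + B w₁ + C). -/
theorem stmt_19 (B C : ℝ) (u : ℤ → ℝ → ℝ)
    (hdiff : ∀ i : ℤ, Differentiable ℝ (u i))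
    (hpos : ∀ (i : ℤ) (x : ℝ),
      0 ≤ C * Real.exp (2 * u (i + 1) x)
        + B * Real.exp (u (i + 1) x + u i x) + C * Real.exp (2 * u i x))
    (heq : ∀ (i : ℤ) (x : ℝ),
      deriv (u (i + 1)) x
        = deriv (u i) x
          + Real.sqrt (C * Real.exp (2 * u (i + 1) x)
              + B * Real.exp (u (i + 1) x + u i x) + C * Real.exp (2 * u i x)))
    (w : ℤ → ℝ → ℝ)
    (hw : ∀ (i : ℤ) (x : ℝ), w i x = Real.exp (u (i + 1) x - u i x)) :
    (∀ (i : ℤ) (x : ℝ), 0 ≤ C * (w i x) ^ 2 + B * w i x + C)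
      ∧ (∀ i : ℤ, Differentiable ℝ (w i))
      ∧ (∀ (i : ℤ) (x : ℝ),
          deriv (w (i + 1)) x * Real.sqrt (C * (w i x) ^ 2 + B * w i x + C)
            = w (i + 1) x * deriv (w i) x
              * Real.sqrt (C * (w (i + 1) x) ^ 2 + B * w (i + 1) x + C)) := by
  obtain rfl : w = fun i x => exp (u (i + 1) x - u i x) := funext fun i => funext (hw i)
  have hder : ∀ i x, HasDerivAt (fun y => exp (u (i + 1) y - u i y))
      (exp (u (i + 1) x - u i x) * √(C * exp (2 * u (i + 1) x)
        + B * exp (u (i + 1) x + u i x) + C * exp (2 * u i x))) x := fun i x =>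
    hasDerivAt_exp_sub_of_deriv_eq_add (hdiff (i + 1) x) (hdiff i x) (heq i x)
  refine ⟨fun i x => ?_, fun i x => (hder i x).differentiableAt, fun i x => ?_⟩
  · rw [quadratic_exp_sub_eq]
    exact mul_nonneg (hpos i x) (sq_nonneg _)
  · rw [(hder (i + 1) x).deriv, (hder i x).deriv, sqrt_quadratic_exp_sub_eq,
      sqrt_quadratic_exp_sub_eq]
    simp only [exp_sub, exp_neg]
    field_simp
end
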